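/- For every a ∈ X and every homogeneous Lie polynomial P ∈ ℚ⟨X⟩ of degree n ≥ 1, one has r(ι a · P) − r(P · ι a) = (n+1)·[ι a, P], i.e., r applied to the commutator [ι a, P] equals (n+1)·[ι a, P]. -/

import Mathlib

/-!
Setting: `ℚ⟨X⟩ = FreeAlgebra ℚ X`, the free associative `ℚ`-algebra on a type `X` of
non-commuting variables, with the commutator bracket `⁅P,Q⁆ = P*Q - Q*P` and canonical
inclusion `ι = FreeAlgebra.ι ℚ`.  The words (elements of `FreeMonoid X`) form a `ℚ`-basis
`FreeAlgebra.basisFreeMonoid ℚ X` of `ℚ⟨X⟩`.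
-/

/-- The right-normed bracketing of a word:
`[ι x₁,[ι x₂,[…,[ι x_{n−1}, ι xₙ]…]]]`, with the empty word mapped to `0`. -/
noncomputable def rword {X : Type*} : List X → FreeAlgebra ℚ X
  | [] => 0
  | [x] => FreeAlgebra.ι ℚ x
  | x :: y :: ys => ⁅FreeAlgebra.ι ℚ x, rword (y :: ys)⁆

/-- The right-normed bracketing map `r : ℚ⟨X⟩ → ℚ⟨X⟩`: the unique `ℚ`-linear map sending the
basis word `w₁w₂⋯wₙ` to `[ι w₁,[ι w₂,[…,[ι w_{n−1}, ι wₙ]…]]]` (and the empty word `1` to `0`,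
and a single letter `x` to `ι x`). -/
noncomputable def rmap (X : Type*) : FreeAlgebra ℚ X →ₗ[ℚ] FreeAlgebra ℚ X :=
  (FreeAlgebra.basisFreeMonoid ℚ X).constr ℚ fun w => rword w.toList

/-- The coefficient of the word `w` in `P`, with respect to the basis of words of `ℚ⟨X⟩`. -/
noncomputable def coeffWord {X : Type*} (P : FreeAlgebra ℚ X) (w : FreeMonoid X) : ℚ :=
  (FreeAlgebra.basisFreeMonoid ℚ X).repr P w

attribute [local instance 100] LieRing.ofAssociativeRing

/-- `P` is a Lie polynomial: it belongs to the Lie subalgebra of `ℚ⟨X⟩` (under the commutator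
bracket) generated by the image of `ι`, i.e. the smallest `ℚ`-subspace of `ℚ⟨X⟩` containing
`ι(X)` and closed under commutators. -/
def IsLiePolynomial {X : Type*} (P : FreeAlgebra ℚ X) : Prop :=
  P ∈ LieSubalgebra.lieSpan ℚ (FreeAlgebra ℚ X) (Set.range (FreeAlgebra.ι ℚ))

/-- `P` is homogeneous of degree `n`: a `ℚ`-linear combination of words of length `n`. -/
def IsHomogeneous {X : Type*} (n : ℕ) (P : FreeAlgebra ℚ X) : Prop :=
  P ∈ Submodule.span ℚ
    ((fun w : List X => (w.map (FreeAlgebra.ι ℚ)).prod) '' {w : List X | w.length = n})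

namespace Stmt14Aux

variable {X : Type*}


variable {X : Type*}

lemma basis_apply (w : FreeMonoid X) :
    FreeAlgebra.basisFreeMonoid ℚ X w = (w.toList.map (FreeAlgebra.ι ℚ)).prod := by
  simp [FreeAlgebra.basisFreeMonoid, Finsupp.basisSingleOne,
    FreeAlgebra.equivMonoidAlgebraFreeMonoid]
  rw [FreeMonoid.lift_apply]

lemma prod_eq_basis (l : List X) :
    (l.map (FreeAlgebra.ι ℚ)).prod
      = FreeAlgebra.basisFreeMonoid ℚ X (FreeMonoid.ofList l) :=
  (basis_apply _).symm

/-- extension of `x ↦ ad (ι x)` to an algebra homomorphism. -/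
noncomputable def adA (X : Type*) :
    FreeAlgebra ℚ X →ₐ[ℚ] Module.End ℚ (FreeAlgebra ℚ X) :=
  FreeAlgebra.lift ℚ fun x => LieAlgebra.ad ℚ (FreeAlgebra ℚ X) (FreeAlgebra.ι ℚ x)

lemma adA_ι (x : X) :
    adA X (FreeAlgebra.ι ℚ x) = LieAlgebra.ad ℚ (FreeAlgebra ℚ X) (FreeAlgebra.ι ℚ x) :=
  FreeAlgebra.lift_ι_apply _ _

/-- the constant coefficient, as a linear map. -/
noncomputable def cmap (X : Type*) : FreeAlgebra ℚ X →ₗ[ℚ] ℚ :=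
  (Finsupp.lapply (1 : FreeMonoid X)).comp (FreeAlgebra.basisFreeMonoid ℚ X).repr.toLinearMap

lemma cmap_basis_one : cmap X (FreeAlgebra.basisFreeMonoid ℚ X 1) = 1 := by
  simp [cmap]

lemma cmap_basis_ne {w : FreeMonoid X} (hw : w ≠ 1) :
    cmap X (FreeAlgebra.basisFreeMonoid ℚ X w) = 0 := by
  classical
  simp [cmap, Finsupp.single_apply, hw]

lemma rmap_basis (w : FreeMonoid X) :
    rmap X (FreeAlgebra.basisFreeMonoid ℚ X w) = rword w.toList :=
  Module.Basis.constr_basis _ _ _ _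

lemma rword_cons (x : X) {l : List X} (h : l ≠ []) :
    rword (x :: l) = ⁅FreeAlgebra.ι ℚ x, rword l⁆ := by
  cases l with
  | nil => exact absurd rfl h
  | cons y ys => rfl

lemma rword_append (l : List X) {m : List X} (hm : m ≠ []) :
    rword (l ++ m) = adA X ((l.map (FreeAlgebra.ι ℚ)).prod) (rword m) := by
  induction l with
  | nil => simp
  | cons x xs ih =>
    have hxm : xs ++ m ≠ [] := fun h => hm (List.append_eq_nil_iff.mp h).2
    rw [List.cons_append, rword_cons x hxm, ih, List.map_cons, List.prod_cons, map_mul,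
      Module.End.mul_apply, adA_ι, LieAlgebra.ad_apply]

lemma rmap_mul (P Q : FreeAlgebra ℚ X) :
    rmap X (P * Q) = adA X P (rmap X Q) + cmap X Q • rmap X P := by
  have hP : P ∈ Submodule.span ℚ (Set.range (FreeAlgebra.basisFreeMonoid ℚ X)) := by
    rw [Module.Basis.span_eq]; trivial
  induction hP using Submodule.span_induction generalizing Q with
  | mem g hg =>
    obtain ⟨v, rfl⟩ := hg
    have hQ : Q ∈ Submodule.span ℚ (Set.range (FreeAlgebra.basisFreeMonoid ℚ X)) := by
      rw [Module.Basis.span_eq]; trivial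
    induction hQ using Submodule.span_induction with
    | mem h hh =>
      obtain ⟨w, rfl⟩ := hh
      have hb : FreeAlgebra.basisFreeMonoid ℚ X v * FreeAlgebra.basisFreeMonoid ℚ X w
          = FreeAlgebra.basisFreeMonoid ℚ X (v * w) := by
        rw [basis_apply, basis_apply, basis_apply]
        rw [show (v * w).toList = v.toList ++ w.toList from rfl, List.map_append,
          List.prod_append]
      by_cases hw : w = 1
      · subst hw
        rw [hb, mul_one, cmap_basis_one, one_smul, rmap_basis (X := X) 1]
        rw [show (1 : FreeMonoid X).toList = [] from rfl]
        simp [rword]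
      · have hwl : w.toList ≠ [] := fun h => hw (FreeMonoid.toList.injective (by simp [h]))
        rw [hb, rmap_basis, rmap_basis, rmap_basis, cmap_basis_ne hw, zero_smul, add_zero,
          show (v * w).toList = v.toList ++ w.toList from rfl, rword_append _ hwl,
          ← basis_apply]
    | zero => simp
    | add a b _ _ ha hb =>
      simp only [mul_add, map_add, ha, hb, add_smul]
      abel
    | smul r a _ ha =>
      simp only [mul_smul_comm, map_smul, ha, smul_add, smul_smul, LinearMap.smul_apply]
      rw [smul_eq_mul]
  | zero => simp
  | add a b _ _ ha hb =>
    simp only [add_mul, map_add, LinearMap.add_apply, ha, hb, smul_add]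
    abel
  | smul r a _ ha =>
    simp only [smul_mul_assoc, map_smul, LinearMap.smul_apply, ha, smul_add, smul_smul,
      smul_comm r]

lemma adA_eq_ad {P : FreeAlgebra ℚ X} (h : IsLiePolynomial P) :
    adA X P = LieAlgebra.ad ℚ (FreeAlgebra ℚ X) P := by
  have h' : P ∈ LieSubalgebra.lieSpan ℚ (FreeAlgebra ℚ X) (Set.range (FreeAlgebra.ι ℚ)) := h
  refine LieSubalgebra.lieSpan_induction (R := ℚ)
    (p := fun u _ => adA X u = LieAlgebra.ad ℚ (FreeAlgebra ℚ X) u) ?_ ?_ ?_ ?_ ?_ h'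
  · rintro _ ⟨x, rfl⟩; exact adA_ι x
  · simp
  · intro x y _ _ hx hy; rw [map_add, map_add, hx, hy]
  · intro r x _ hx; rw [map_smul, map_smul, hx]
  · intro x y _ _ hx hy
    have h1 : adA X ⁅x, y⁆ = ⁅adA X x, adA X y⁆ := by
      rw [Ring.lie_def, map_sub, map_mul, map_mul, Ring.lie_def]
    rw [h1, hx, hy, ← LieHom.map_lie]

lemma homog_mul_left (l : List X) {q : ℕ} {h : FreeAlgebra ℚ X} (hh : IsHomogeneous q h) :
    IsHomogeneous (l.length + q) ((l.map (FreeAlgebra.ι ℚ)).prod * h) := by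
  have hh' : h ∈ Submodule.span ℚ
      ((fun w : List X => (w.map (FreeAlgebra.ι ℚ)).prod) '' {w : List X | w.length = q}) := hh
  clear hh
  show _ ∈ Submodule.span ℚ _
  induction hh' using Submodule.span_induction with
  | mem b hb =>
    obtain ⟨m2, hm, rfl⟩ := hb
    have hm' : m2.length = q := hm
    exact Submodule.subset_span ⟨l ++ m2, by simp [hm'], by simp⟩
  | zero => simp
  | add a b _ _ ha hb => rw [mul_add]; exact add_mem ha hb
  | smul r a _ ha => rw [mul_smul_comm]; exact Submodule.smul_mem _ _ ha

lemma homog_mul {p q : ℕ} {g h : FreeAlgebra ℚ X} (hg : IsHomogeneous p g)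
    (hh : IsHomogeneous q h) : IsHomogeneous (p + q) (g * h) := by
  have hg' : g ∈ Submodule.span ℚ
      ((fun w : List X => (w.map (FreeAlgebra.ι ℚ)).prod) '' {w : List X | w.length = p}) := hg
  clear hg
  show _ ∈ Submodule.span ℚ _
  induction hg' using Submodule.span_induction with
  | mem a ha =>
    obtain ⟨l, hl, rfl⟩ := ha
    have hl' : l.length = p := hl
    have := homog_mul_left l hh
    rw [hl'] at this
    exact this
  | zero => simp
  | add a b _ _ ha hb => rw [add_mul]; exact add_mem ha hb
  | smul r a _ ha => rw [smul_mul_assoc]; exact Submodule.smul_mem _ _ ha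

lemma cmap_homog {n : ℕ} (hn : 1 ≤ n) {P : FreeAlgebra ℚ X}
    (hP : P ∈ Submodule.span ℚ
      ((fun w : List X => (w.map (FreeAlgebra.ι ℚ)).prod) '' {w : List X | w.length = n})) :
    cmap X P = 0 := by
  induction hP using Submodule.span_induction with
  | mem g hg =>
    obtain ⟨l, hl, rfl⟩ := hg
    have hl' : l.length = n := hl
    show cmap X ((l.map (FreeAlgebra.ι ℚ)).prod) = 0
    rw [prod_eq_basis]
    have hne : FreeMonoid.ofList l ≠ 1 := by
      intro h
      have hnil : l = [] := by
        have := congrArg FreeMonoid.toList h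
        simpa using this
      rw [hnil] at hl'
      simp at hl'
      omega
    exact cmap_basis_ne hne
  | zero => simp
  | add a b _ _ ha hb => rw [map_add, ha, hb, add_zero]
  | smul r a _ ha => rw [map_smul, ha, smul_zero]

noncomputable def projn (X : Type*) (n : ℕ) : FreeAlgebra ℚ X →ₗ[ℚ] FreeAlgebra ℚ X :=
  (FreeAlgebra.basisFreeMonoid ℚ X).constr ℚ fun w =>
    if w.toList.length = n then FreeAlgebra.basisFreeMonoid ℚ X w else 0

lemma projn_homog_eq {n : ℕ} {P : FreeAlgebra ℚ X}
    (hP : P ∈ Submodule.span ℚ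
      ((fun w : List X => (w.map (FreeAlgebra.ι ℚ)).prod) '' {w : List X | w.length = n})) :
    projn X n P = P := by
  induction hP using Submodule.span_induction with
  | mem g hg =>
    obtain ⟨l, hl, rfl⟩ := hg
    have hl' : l.length = n := hl
    show projn X n ((l.map (FreeAlgebra.ι ℚ)).prod) = (l.map (FreeAlgebra.ι ℚ)).prod
    rw [prod_eq_basis, projn, Module.Basis.constr_basis]
    simp only [FreeMonoid.toList_ofList]
    exact if_pos hl'
  | zero => simp
  | add a b _ _ ha hb => rw [map_add, ha, hb]
  | smul r a _ ha => rw [map_smul, ha]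

lemma projn_homog_ne {m n : ℕ} (hmn : m ≠ n) {P : FreeAlgebra ℚ X}
    (hP : P ∈ Submodule.span ℚ
      ((fun w : List X => (w.map (FreeAlgebra.ι ℚ)).prod) '' {w : List X | w.length = m})) :
    projn X n P = 0 := by
  induction hP using Submodule.span_induction with
  | mem g hg =>
    obtain ⟨l, hl, rfl⟩ := hg
    have hl' : l.length = m := hl
    show projn X n ((l.map (FreeAlgebra.ι ℚ)).prod) = 0
    rw [prod_eq_basis, projn, Module.Basis.constr_basis]
    simp only [FreeMonoid.toList_ofList]
    exact if_neg (by rw [hl']; exact hmn)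
  | zero => simp
  | add a b _ _ ha hb => rw [map_add, ha, hb, add_zero]
  | smul r a _ ha => rw [map_smul, ha, smul_zero]

/-- homogeneous Lie polynomials with the Dynkin property. -/
def GSet (X : Type*) : Set (FreeAlgebra ℚ X) :=
  {v | IsLiePolynomial v ∧ ∃ m : ℕ, 1 ≤ m ∧ IsHomogeneous m v ∧ rmap X v = (m : ℚ) • v}

lemma bracket_G {g h : FreeAlgebra ℚ X} (hg : g ∈ GSet X) (hh : h ∈ GSet X) :
    ⁅g, h⁆ ∈ GSet X := by
  obtain ⟨hgL, p, hp1, hgH, hgr⟩ := hg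
  obtain ⟨hhL, q, hq1, hhH, hhr⟩ := hh
  refine ⟨LieSubalgebra.lie_mem _ hgL hhL, p + q, le_trans hp1 (Nat.le_add_right p q), ?_, ?_⟩
  · rw [Ring.lie_def]
    exact Submodule.sub_mem _ (homog_mul hgH hhH) (by rw [Nat.add_comm]; exact homog_mul hhH hgH)
  · have e1 : rmap X (g * h) = adA X g (rmap X h) := by
      rw [rmap_mul, cmap_homog hq1 hhH, zero_smul, add_zero]
    have e2 : rmap X (h * g) = adA X h (rmap X g) := by
      rw [rmap_mul, cmap_homog hp1 hgH, zero_smul, add_zero]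
    rw [Ring.lie_def, map_sub, e1, e2, hgr, hhr, adA_eq_ad hgL, adA_eq_ad hhL,
      LieAlgebra.ad_apply, LieAlgebra.ad_apply, lie_smul, lie_smul, ← lie_skew h g,
      smul_neg, sub_neg_eq_add, Nat.cast_add, add_smul, Ring.lie_def, add_comm]

lemma spanG_lie {u v : FreeAlgebra ℚ X} (hu : u ∈ Submodule.span ℚ (GSet X))
    (hv : v ∈ Submodule.span ℚ (GSet X)) : ⁅u, v⁆ ∈ Submodule.span ℚ (GSet X) := by
  induction hu using Submodule.span_induction with
  | mem g hg =>
    induction hv using Submodule.span_induction with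
    | mem h hh => exact Submodule.subset_span (bracket_G hg hh)
    | zero => rw [lie_zero]; exact zero_mem _
    | add a b _ _ ha hb => rw [lie_add]; exact add_mem ha hb
    | smul r a _ ha => rw [lie_smul]; exact Submodule.smul_mem _ _ ha
  | zero => rw [zero_lie]; exact zero_mem _
  | add a b _ _ ha hb => rw [add_lie]; exact add_mem ha hb
  | smul r a _ ha => rw [smul_lie]; exact Submodule.smul_mem _ _ ha

lemma lie_mem_spanG {P : FreeAlgebra ℚ X} (h : IsLiePolynomial P) :
    P ∈ Submodule.span ℚ (GSet X) := by
  have h' : P ∈ LieSubalgebra.lieSpan ℚ (FreeAlgebra ℚ X) (Set.range (FreeAlgebra.ι ℚ)) := h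
  refine LieSubalgebra.lieSpan_induction (R := ℚ)
    (p := fun u _ => u ∈ Submodule.span ℚ (GSet X)) ?_ ?_ ?_ ?_ ?_ h'
  · rintro _ ⟨x, rfl⟩
    refine Submodule.subset_span ⟨LieSubalgebra.subset_lieSpan ⟨x, rfl⟩, 1, le_refl 1, ?_, ?_⟩
    · exact Submodule.subset_span ⟨[x], rfl, by simp⟩
    · have hx : FreeAlgebra.ι ℚ x = FreeAlgebra.basisFreeMonoid ℚ X (FreeMonoid.ofList [x]) := by
        rw [← prod_eq_basis]; simp
      conv_lhs => rw [hx, rmap_basis]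
      simp only [FreeMonoid.toList_ofList, Nat.cast_one, one_smul]
      rfl
  · exact zero_mem _
  · intro x y _ _ hx hy; exact add_mem hx hy
  · intro r x _ hx; exact Submodule.smul_mem _ _ hx
  · intro x y _ _ hx hy; exact spanG_lie hx hy

lemma dsw_aux (n : ℕ) {u : FreeAlgebra ℚ X} (hu : u ∈ Submodule.span ℚ (GSet X)) :
    rmap X (projn X n u) = (n : ℚ) • projn X n u := by
  induction hu using Submodule.span_induction with
  | mem g hg =>
    obtain ⟨-, m, -, hgH, hgr⟩ := hg
    by_cases hmn : m = n
    · subst hmn; rw [projn_homog_eq hgH, hgr]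
    · rw [projn_homog_ne hmn hgH]; simp
  | zero => simp
  | add a b _ _ ha hb => rw [map_add, map_add, ha, hb, smul_add]
  | smul r a _ ha => rw [map_smul, map_smul, ha, smul_comm]

lemma dsw {n : ℕ} {P : FreeAlgebra ℚ X} (hL : IsLiePolynomial P) (hH : IsHomogeneous n P) :
    rmap X P = (n : ℚ) • P := by
  have key := dsw_aux n (lie_mem_spanG hL)
  rwa [projn_homog_eq hH] at key

end Stmt14Aux

/-- If `P` is a homogeneous Lie polynomial of degree `n ≥ 1` and `a ∈ X`, then
`r(ι a · P) − r(P · ι a) = (n+1)·[ι a, P]`, i.e. `r([ι a, P]) = (n+1)·[ι a, P]`. -/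
theorem stmt_14 {X : Type*} (a : X) (n : ℕ) (hn : 1 ≤ n) (P : FreeAlgebra ℚ X)
    (hLie : IsLiePolynomial P) (hHom : IsHomogeneous n P) :
    rmap X (FreeAlgebra.ι ℚ a * P) - rmap X (P * FreeAlgebra.ι ℚ a)
        = ((n : ℚ) + 1) • ⁅FreeAlgebra.ι ℚ a, P⁆ ∧
      rmap X ⁅FreeAlgebra.ι ℚ a, P⁆ = ((n : ℚ) + 1) • ⁅FreeAlgebra.ι ℚ a, P⁆ := by
  have haH : IsHomogeneous 1 (FreeAlgebra.ι ℚ a) :=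
    Submodule.subset_span ⟨[a], rfl, by simp⟩
  have hL : IsLiePolynomial ⁅FreeAlgebra.ι ℚ a, P⁆ :=
    LieSubalgebra.lie_mem _ (LieSubalgebra.subset_lieSpan ⟨a, rfl⟩) hLie
  have hH : IsHomogeneous (n + 1) ⁅FreeAlgebra.ι ℚ a, P⁆ := by
    rw [Ring.lie_def]
    exact Submodule.sub_mem _ (by rw [Nat.add_comm]; exact Stmt14Aux.homog_mul haH hHom)
      (Stmt14Aux.homog_mul hHom haH)
  have h2 := Stmt14Aux.dsw hL hH
  rw [Nat.cast_add, Nat.cast_one] at h2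
  refine ⟨?_, h2⟩
  rw [← map_sub, ← Ring.lie_def, h2]
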